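/- Let G be a minimal non-DP-(3,1)*-colorable graph, i.e., a finite simple graph that is not DP-(3,1)*-colorable but every graph obtained from G by deleting a nonempty set of vertices is DP-(3,1)*-colorable. Then every vertex of degree 4 in G is adjacent to at most two vertices of degree 3. -/

import Mathlib

/-!
Take a cover without 1-representative set and, by minimality, a 1-representative choice `g` on
`G - v`. Each of the four neighbours of `v` blocks at most one of the three colors of `v`, so some
color is unblocked, or two colors are blocked by one neighbour each, one of which has degree 3.
Coloring `v` with such a color `c` works unless its blocker `u` already has a partner `w`. Then
`(u, g u)` is adjacent to both `(v, c)` and `(w, g w)`, so the three neighbours of `u` forbid at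
most two colors, and recoloring `u` with a free color leaves `c` unblocked.
-/

/-- A cover `H` of a graph `G` with respect to a list assignment `L`.
The vertex set of the cover is modeled as the fibers `{u} × L u` inside `V × α`;
all edges of `H` are required to lie inside these fibers. -/
structure DPCover {V α : Type*} (G : SimpleGraph V) (L : V → Finset α)
    (H : SimpleGraph (V × α)) : Prop where
  mem_of_adj : ∀ (u v : V) (c c' : α), H.Adj (u, c) (v, c') → c ∈ L u ∧ c' ∈ L v
  fiber_complete : ∀ (u : V) (c c' : α), c ∈ L u → c' ∈ L u → c ≠ c' →
    H.Adj (u, c) (u, c')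
  matching : ∀ (u v : V), u ≠ v → ∀ (c c' c'' : α),
    H.Adj (u, c) (v, c') → H.Adj (u, c) (v, c'') → c' = c''
  no_edge : ∀ (u v : V), u ≠ v → ¬ G.Adj u v → ∀ (c c' : α), ¬ H.Adj (u, c) (v, c')

/-- `S` is a 1-representative set for a cover `H`: it consists of vertices of
the cover, has size `|V(G)|`, contains at most one vertex from each fiber, and
induces a subgraph of `H` of maximum degree at most 1. -/
def IsRepSet {V α : Type*} [Fintype V] (L : V → Finset α)
    (H : SimpleGraph (V × α)) (d : ℕ) (S : Finset (V × α)) : Prop :=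
  (∀ p ∈ S, p.2 ∈ L p.1) ∧ S.card = Fintype.card V ∧
    (∀ (u : V) (c c' : α), (u, c) ∈ S → (u, c') ∈ S → c = c') ∧
    ∀ p ∈ S, {q ∈ (S : Set (V × α)) | H.Adj p q}.ncard ≤ d

/-- `G` is DP-`(3,1)*`-colorable: for every list assignment `L` with
`|L(v)| = 3` for all `v` and every cover `H` of `G` with respect to `L`,
there is a 1-representative set. -/
def DPColorable31 {W : Type*} [Fintype W] (G : SimpleGraph W) : Prop :=
  ∀ L : W → Finset ℕ, (∀ v : W, (L v).card = 3) →
    ∀ H : SimpleGraph (W × ℕ), DPCover G L H →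
      ∃ S : Finset (W × ℕ), IsRepSet L H 1 S

section

variable {V α : Type*} {G : SimpleGraph V} {L : V → Finset α} {H : SimpleGraph (V × α)}

namespace DPCover

theorem adj_of_adj (hH : DPCover G L H) {u w : V} {a b : α} (huw : u ≠ w)
    (h : H.Adj (u, a) (w, b)) : G.Adj u w := by
  by_contra hG
  exact hH.no_edge u w huw hG a b h

theorem eq_of_adj_of_adj (hH : DPCover G L H) {u w : V} {a a' b : α} (huw : u ≠ w)
    (h : H.Adj (u, a) (w, b)) (h' : H.Adj (u, a') (w, b)) : a = a' :=
  hH.matching w u huw.symm b a a' h.symm h'.symm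

theorem sum_card_filter_adj_le (hH : DPCover G L H) [DecidableRel H.Adj] {u : V}
    (f : V → α) (C : Finset α) {P : Finset V} (hP : u ∉ P) :
    ∑ a ∈ C, (P.filter fun p => H.Adj (u, a) (p, f p)).card ≤ P.card :=
  calc ∑ a ∈ C, (P.filter fun p => H.Adj (u, a) (p, f p)).card
      = ∑ p ∈ P, (C.filter fun a => H.Adj (u, a) (p, f p)).card := by
        simp only [Finset.card_filter]
        exact Finset.sum_comm
    _ ≤ ∑ _p ∈ P, 1 := Finset.sum_le_sum fun p hp => Finset.card_le_one.2 fun a ha a' ha' =>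
        hH.eq_of_adj_of_adj (ne_of_mem_of_not_mem hp hP).symm (Finset.mem_filter.1 ha).2
          (Finset.mem_filter.1 ha').2
    _ = P.card := by simp

theorem card_filter_exists_adj_le (hH : DPCover G L H) [DecidableRel H.Adj] {u : V}
    (f : V → α) (C : Finset α) {P : Finset V} (hP : u ∉ P) :
    (C.filter fun a => ∃ p ∈ P, H.Adj (u, a) (p, f p)).card ≤ P.card := by
  set C' := C.filter fun a => ∃ p ∈ P, H.Adj (u, a) (p, f p)
  calc C'.card = ∑ _a ∈ C', 1 := by simp
    _ ≤ ∑ a ∈ C', (P.filter fun p => H.Adj (u, a) (p, f p)).card := by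
      refine Finset.sum_le_sum fun a ha => Finset.card_pos.2 ?_
      obtain ⟨-, p, hp, hadj⟩ := Finset.mem_filter.1 ha
      exact ⟨p, Finset.mem_filter.2 ⟨hp, hadj⟩⟩
    _ ≤ P.card := hH.sum_card_filter_adj_le f C' hP

/-- `p₁` and `p₂` forbid the same color `f u`, so the neighbours of `u` forbid fewer than
`|L u|` colors. -/
theorem exists_color_not_adj [Fintype V] [DecidableRel G.Adj] (hH : DPCover G L H)
    {u p₁ p₂ : V} {f : V → α} (hp : p₁ ≠ p₂) (h₁ : H.Adj (u, f u) (p₁, f p₁))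
    (h₂ : H.Adj (u, f u) (p₂, f p₂)) (hdeg : G.degree u ≤ (L u).card) :
    ∃ a ∈ L u, ∀ p, p ≠ u → ¬ H.Adj (u, a) (p, f p) := by
  classical
  have hp₁ : u ≠ p₁ := fun h => H.irrefl (h ▸ h₁)
  have hp₂ : u ≠ p₂ := fun h => H.irrefl (h ▸ h₂)
  set P := G.neighborFinset u \ {p₁, p₂}
  have hpair : ({p₁, p₂} : Finset V) ⊆ G.neighborFinset u := by
    simp [Finset.insert_subset_iff, hH.adj_of_adj hp₁ h₁, hH.adj_of_adj hp₂ h₂]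
  have hP : P.card + 2 = G.degree u := by
    rw [Finset.card_sdiff_of_subset hpair, Finset.card_pair hp, G.card_neighborFinset_eq_degree]
    have := Finset.card_le_card hpair
    rw [Finset.card_pair hp, G.card_neighborFinset_eq_degree] at this
    omega
  set K := (L u).filter fun a => ∃ p ∈ P, H.Adj (u, a) (p, f p)
  have hK : (insert (f u) K).card < (L u).card :=
    calc (insert (f u) K).card ≤ K.card + 1 := Finset.card_insert_le _ _
      _ ≤ P.card + 1 := by grw [hH.card_filter_exists_adj_le f (L u) (by simp [P])]
      _ < (L u).card := by omega
  obtain ⟨a, ha, haK⟩ := Finset.exists_mem_notMem_of_card_lt_card hK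
  refine ⟨a, ha, fun p hpu hadj => haK ?_⟩
  by_cases hpP : p ∈ P
  · exact Finset.mem_insert_of_mem (Finset.mem_filter.2 ⟨ha, p, hpP, hadj⟩)
  · have : p = p₁ ∨ p = p₂ := by
      simpa [P, hH.adj_of_adj hpu.symm hadj, or_iff_not_imp_left] using hpP
    rcases this with rfl | rfl
    · exact Finset.mem_insert.2 (Or.inl (hH.eq_of_adj_of_adj hp₁ hadj h₁))
    · exact Finset.mem_insert.2 (Or.inl (hH.eq_of_adj_of_adj hp₂ hadj h₂))

end DPCover

/-- A 1-representative set over `s`, encoded as the graph `{(u, f u) | u ∈ s}` of a function. -/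
def IsRepSelectionOn (L : V → Finset α) (H : SimpleGraph (V × α)) (s : Set V) (f : V → α) :
    Prop :=
  ∀ u ∈ s, f u ∈ L u ∧ {w ∈ s | H.Adj (u, f u) (w, f w)}.Subsingleton

namespace IsRepSelectionOn

theorem update [DecidableEq V] {s : Set V} {f : V → α} {v : V} {a : α}
    (hf : IsRepSelectionOn L H s f) (ha : a ∈ L v)
    (hnbr : {p ∈ s | p ≠ v ∧ H.Adj (v, a) (p, f p)}.Subsingleton)
    (hfree : ∀ u ∈ s, u ≠ v → H.Adj (v, a) (u, f u) →
      ∀ p ∈ s, p ≠ v → ¬ H.Adj (u, f u) (p, f p)) :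
    IsRepSelectionOn L H (insert v s) (Function.update f v a) := by
  intro x hx
  rcases eq_or_ne x v with rfl | hxv
  · refine ⟨by simpa using ha, hnbr.anti ?_⟩
    rintro p ⟨hp, hadj⟩
    have hpx : p ≠ x := by
      rintro rfl
      exact H.irrefl hadj
    simp only [Function.update_self, Function.update_of_ne hpx] at hadj
    exact ⟨hp.resolve_left hpx, hpx, hadj⟩
  have hxs : x ∈ s := hx.resolve_left hxv
  simp only [Function.update_of_ne hxv]
  refine ⟨(hf x hxs).1, ?_⟩
  by_cases hxa : H.Adj (v, a) (x, f x)
  · refine (Set.subsingleton_singleton (a := v)).anti ?_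
    rintro p ⟨hp, hadj⟩
    by_contra hpv
    rw [Function.update_of_ne hpv] at hadj
    exact hfree x hxs hxv hxa p (hp.resolve_left hpv) hpv hadj
  · refine (hf x hxs).2.anti ?_
    rintro p ⟨hp, hadj⟩
    rcases eq_or_ne p v with rfl | hpv
    · rw [Function.update_self] at hadj
      exact absurd hadj.symm hxa
    · rw [Function.update_of_ne hpv] at hadj
      exact ⟨hp.resolve_left hpv, hadj⟩

theorem update_of_not_adj [DecidableEq V] {s : Set V} {f : V → α} {v : V} {a : α}
    (hf : IsRepSelectionOn L H s f) (ha : a ∈ L v)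
    (hiso : ∀ p ∈ s, p ≠ v → ¬ H.Adj (v, a) (p, f p)) :
    IsRepSelectionOn L H (insert v s) (Function.update f v a) :=
  hf.update ha (fun p hp _ _ => absurd hp.2.2 (hiso p hp.1 hp.2.1))
    fun u hu huv h => absurd h (hiso u hu huv)

theorem exists_isRepSet [Fintype V] {f : V → α} (hf : IsRepSelectionOn L H Set.univ f) :
    ∃ S, IsRepSet L H 1 S := by
  let σ : V ↪ V × α := ⟨fun u => (u, f u), fun _ _ h => congrArg Prod.fst h⟩
  have hmem : ∀ {p : V × α}, p ∈ Finset.univ.map σ ↔ p.2 = f p.1 := by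
    rintro ⟨u, c⟩
    simp only [Finset.mem_map, Finset.mem_univ, true_and, σ]
    constructor
    · rintro ⟨w, h⟩
      cases h
      rfl
    · rintro rfl
      exact ⟨u, rfl⟩
  refine ⟨Finset.univ.map σ, fun p hp => ?_, by simp, fun u c c' hc hc' => ?_, fun p hp => ?_⟩
  · exact hmem.1 hp ▸ (hf p.1 trivial).1
  · exact (hmem.1 hc).trans (hmem.1 hc').symm
  · obtain ⟨u, -, rfl⟩ := Finset.mem_map.1 hp
    have hsub : {q ∈ ((Finset.univ.map σ : Finset (V × α)) : Set (V × α)) | H.Adj (σ u) q}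
        ⊆ σ '' {w | H.Adj (u, f u) (w, f w)} := by
      rintro ⟨w, c⟩ ⟨hq, hadj⟩
      obtain rfl : c = f w := hmem.1 hq
      exact ⟨w, hadj, rfl⟩
    have hsing : (σ '' {w | H.Adj (u, f u) (w, f w)}).Subsingleton :=
      ((hf u trivial).2.anti fun w hw => ⟨trivial, hw⟩).image σ
    exact (Set.ncard_le_one (hsing.anti hsub).finite).2 (hsing.anti hsub)

end IsRepSelectionOn

theorem IsRepSet.exists_isRepSelectionOn [Fintype V] {S : Finset (V × α)}
    (hS : IsRepSet L H 1 S) : ∃ f : V → α, IsRepSelectionOn L H Set.univ f := by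
  classical
  obtain ⟨hL, hcard, hfiber, hdeg⟩ := hS
  have hfst : S.image Prod.fst = Finset.univ := by
    refine Finset.eq_univ_of_card _ ?_
    rw [Finset.card_image_of_injOn, hcard]
    rintro ⟨u, c⟩ hp ⟨w, c'⟩ hq (rfl : u = w)
    rw [hfiber u c c' hp hq]
  have hsel : ∀ u, ∃ c, (u, c) ∈ S := fun u => by
    obtain ⟨p, hp, rfl⟩ := Finset.mem_image.1 (hfst ▸ Finset.mem_univ u)
    exact ⟨p.2, hp⟩
  choose f hf using hsel
  refine ⟨f, fun u _ => ⟨hL _ (hf u), ?_⟩⟩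
  have hS1 : {q ∈ (S : Set (V × α)) | H.Adj (u, f u) q}.Subsingleton :=
    (Set.ncard_le_one ((S.finite_toSet).subset fun _ hq => hq.1)).1 (hdeg _ (hf u))
  refine (hS1.preimage (f := fun w => (w, f w)) fun _ _ h => congrArg Prod.fst h).anti ?_
  exact fun w hw => ⟨hf w, hw.2⟩

theorem DPCover.induce (hH : DPCover G L H) (s : Set V) :
    DPCover (G.induce s) (fun u => L u) (H.comap (Prod.map Subtype.val id)) where
  mem_of_adj u w c c' h := hH.mem_of_adj u w c c' h
  fiber_complete u c c' hc hc' hne := hH.fiber_complete u c c' hc hc' hne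
  matching u w huw c c' c'' h h' := hH.matching u w (Subtype.coe_ne_coe.2 huw) c c' c'' h h'
  no_edge u w huw hG c c' := hH.no_edge u w (Subtype.coe_ne_coe.2 huw) hG c c'

theorem DPCover.exists_isRepSelectionOn {s : Set V} [Fintype s] {L : V → Finset ℕ}
    {H : SimpleGraph (V × ℕ)} (hH : DPCover G L H) (hL : ∀ u, (L u).card = 3)
    (hs : DPColorable31 (G.induce s)) : ∃ g : V → ℕ, IsRepSelectionOn L H s g := by
  obtain ⟨S, hS⟩ := hs _ (fun u => hL u) _ (hH.induce s)
  obtain ⟨σ, hσ⟩ := hS.exists_isRepSelectionOn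
  have hext : ∀ u : s, Function.extend Subtype.val σ 0 u = σ u :=
    Subtype.val_injective.extend_apply σ 0
  refine ⟨Function.extend Subtype.val σ 0, fun u hu => ?_⟩
  rw [hext ⟨u, hu⟩]
  refine ⟨(hσ ⟨u, hu⟩ trivial).1, ?_⟩
  rintro w₁ ⟨hw₁, h₁⟩ w₂ ⟨hw₂, h₂⟩
  rw [hext ⟨w₁, hw₁⟩] at h₁
  rw [hext ⟨w₂, hw₂⟩] at h₂
  have hw : (⟨w₁, hw₁⟩ : s) = ⟨w₂, hw₂⟩ := (hσ ⟨u, hu⟩ trivial).2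
    (show (⟨w₁, hw₁⟩ : s) ∈ _ from ⟨trivial, h₁⟩)
    (show (⟨w₂, hw₂⟩ : s) ∈ _ from ⟨trivial, h₂⟩)
  exact congrArg Subtype.val hw

theorem one_lt_card_filter_eq_one {ι : Type*} (s : Finset ι) (n : ι → ℕ)
    (hpos : ∀ i ∈ s, 0 < n i) (hsum : ∑ i ∈ s, n i + 2 ≤ 2 * s.card) :
    1 < (s.filter fun i => n i = 1).card := by
  have hle : ∀ i ∈ s, 2 ≤ n i + if n i = 1 then 1 else 0 := fun i hi => by
    have := hpos i hi
    split_ifs <;> omega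
  have := Finset.sum_le_sum hle
  rw [Finset.sum_const, smul_eq_mul, Finset.sum_add_distrib, ← Finset.card_filter] at this
  omega

section Blockers

variable [Fintype V] [DecidableRel G.Adj] [DecidableRel H.Adj]

variable (G H) in
def blockers (g : V → α) (v : V) (c : α) : Finset V :=
  (G.neighborFinset v).filter fun u => H.Adj (v, c) (u, g u)

theorem DPCover.mem_blockers (hH : DPCover G L H) {g : V → α} {v u : V} {c : α} (huv : u ≠ v)
    (h : H.Adj (v, c) (u, g u)) : u ∈ blockers G H g v c :=
  Finset.mem_filter.2 ⟨G.mem_neighborFinset _ _ |>.2 (hH.adj_of_adj huv.symm h), h⟩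

theorem DPCover.exists_color_blockers_le_one (hH : DPCover G L H) {v : V} (g : V → α)
    (hLv : (L v).card = 3) (hv : G.degree v ≤ 4)
    (h3 : 2 < ((G.neighborFinset v).filter fun u => G.degree u = 3).card) :
    ∃ c ∈ L v, (blockers G H g v c).card ≤ 1 ∧
      ∀ u ∈ blockers G H g v c, G.degree u = 3 := by
  by_cases hempty : ∃ c ∈ L v, blockers G H g v c = ∅
  · obtain ⟨c, hc, h⟩ := hempty
    exact ⟨c, hc, by simp [h], by simp [h]⟩
  push Not at hempty
  have hsum : ∑ c ∈ L v, (blockers G H g v c).card ≤ 4 :=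
    (hH.sum_card_filter_adj_le g (L v) (G.notMem_neighborFinset_self v)).trans hv
  obtain ⟨c₁, hc₁, c₂, hc₂, hc⟩ := Finset.one_lt_card.1 <|
    one_lt_card_filter_eq_one (L v) (fun c => (blockers G H g v c).card)
      (fun c hc => Finset.card_pos.2 (hempty c hc)) (by omega)
  rw [Finset.mem_filter, Finset.card_eq_one] at hc₁ hc₂
  obtain ⟨hc₁, u₁, hu₁⟩ := hc₁
  obtain ⟨hc₂, u₂, hu₂⟩ := hc₂
  have hmem : ∀ {c u}, blockers G H g v c = {u} →
      u ∈ G.neighborFinset v ∧ H.Adj (v, c) (u, g u) :=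
    fun h => Finset.mem_filter.1 (h ▸ Finset.mem_singleton_self _)
  have hu : u₁ ≠ u₂ := by
    rintro rfl
    exact hc (hH.eq_of_adj_of_adj (G.ne_of_adj ((G.mem_neighborFinset _ _).1 (hmem hu₁).1))
      (hmem hu₁).2 (hmem hu₂).2)
  have hdeg : G.degree u₁ = 3 ∨ G.degree u₂ = 3 := by
    by_contra! hne
    have hsplit := Finset.card_filter_add_card_filter_not (s := G.neighborFinset v)
      fun u => G.degree u = 3
    have : 1 < ((G.neighborFinset v).filter fun u => ¬ G.degree u = 3).card :=
      Finset.one_lt_card.2 ⟨u₁, Finset.mem_filter.2 ⟨(hmem hu₁).1, hne.1⟩,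
        u₂, Finset.mem_filter.2 ⟨(hmem hu₂).1, hne.2⟩, hu⟩
    rw [G.card_neighborFinset_eq_degree] at hsplit
    omega
  rcases hdeg with h | h
  · exact ⟨c₁, hc₁, by simp [hu₁], by simp [hu₁, h]⟩
  · exact ⟨c₂, hc₂, by simp [hu₂], by simp [hu₂, h]⟩

/-- If the blocker `u` of `c` already has a partner, recoloring `u` by `exists_color_not_adj`
frees `c`. -/
theorem IsRepSelectionOn.exists_univ_of_blockers [DecidableEq V] (hH : DPCover G L H) {v : V}
    {g : V → α} {c : α} (hg : IsRepSelectionOn L H {v}ᶜ g) (hc : c ∈ L v)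
    (hB : (blockers G H g v c).card ≤ 1)
    (hdeg : ∀ u ∈ blockers G H g v c, G.degree u ≤ (L u).card) :
    ∃ f, IsRepSelectionOn L H Set.univ f := by
  have huniv : ∀ {s : Set V}, {v}ᶜ ⊆ s → insert v s = Set.univ := fun hs =>
    Set.eq_univ_of_forall fun x => (eq_or_ne x v).imp id fun hx => hs hx
  by_cases hfree : ∀ u ∈ blockers G H g v c, ∀ p ∈ ({v}ᶜ : Set V), p ≠ v →
      ¬ H.Adj (u, g u) (p, g p)
  · refine ⟨_, huniv subset_rfl ▸ hg.update hc ?_ fun u hu huv h => hfree u ?_⟩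
    · rintro p ⟨hp, hpv, hadj⟩ q ⟨hq, hqv, hadj'⟩
      exact Finset.card_le_one.1 hB p (hH.mem_blockers hpv hadj) q (hH.mem_blockers hqv hadj')
    · exact hH.mem_blockers huv h
  push Not at hfree
  obtain ⟨u, hu, w, -, hwv, huw⟩ := hfree
  have huv : u ≠ v :=
    (G.ne_of_adj ((G.mem_neighborFinset _ _).1 (Finset.mem_filter.1 hu).1)).symm
  set f := Function.update g v c
  obtain ⟨a, ha, hiso⟩ :=
    hH.exists_color_not_adj (f := f) (u := u) (p₁ := v) (p₂ := w) hwv.symm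
      (by simpa [f, huv] using (Finset.mem_filter.1 hu).2.symm)
      (by simpa [f, huv, hwv] using huw) (by simpa [f, huv] using hdeg u hu)
  have hg' : IsRepSelectionOn L H (insert u {v}ᶜ) (Function.update g u a) :=
    hg.update_of_not_adj ha fun p hp hpu => by
      simpa [f, Function.update_of_ne (show p ≠ v from hp)] using hiso p hpu
  refine ⟨_, huniv (Set.subset_insert _ _) ▸ hg'.update_of_not_adj hc fun p _ hpv hadj => ?_⟩
  rcases eq_or_ne p u with rfl | hpu
  · exact hiso v huv.symm (by simpa [f] using hadj.symm)
  · rw [Function.update_of_ne hpu] at hadj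
    exact hpu (Finset.card_le_one.1 hB p (hH.mem_blockers hpv hadj) u hu)

end Blockers

end

/-- If `G` is a minimal non-DP-`(3,1)*`-colorable graph (not DP-`(3,1)*`-colorable,
but every graph obtained from `G` by deleting a nonempty set of vertices is
DP-`(3,1)*`-colorable), then every vertex of degree 4 in `G` is adjacent to at
most two vertices of degree 3. -/
theorem minimal_four_vertex_few_three_neighbors
    {V : Type*} [Fintype V] [DecidableEq V]
    (G : SimpleGraph V) [DecidableRel G.Adj]
    (hnot : ¬ DPColorable31 G)
    (hmin : ∀ s : Finset V, s.Nonempty →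
      DPColorable31 (G.induce ((sᶜ : Finset V) : Set V)))
    (v : V) (hv : G.degree v = 4) :
    ((G.neighborFinset v).filter (fun u => G.degree u = 3)).card ≤ 2 := by
  classical
  by_contra! h3
  refine hnot fun L hL H hH => ?_
  obtain ⟨g, hg⟩ := hH.exists_isRepSelectionOn hL (hmin {v} (Finset.singleton_nonempty v))
  rw [Finset.coe_compl, Finset.coe_singleton] at hg
  obtain ⟨c, hc, hB, hB3⟩ := hH.exists_color_blockers_le_one g (hL v) hv.le h3
  obtain ⟨f, hf⟩ := hg.exists_univ_of_blockers hH hc hB fun u hu => by rw [hB3 u hu, hL u]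
  exact hf.exists_isRepSet
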